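/- Suppose the primal SDP sup{bᵀy : A₀ - Σ_k y_k A_k ∈ S^n_+} has a strictly feasible point (i.e., some y with A₀ - Σ_k y_k A_k positive definite) and the dual SDP inf{A₀ • X : A_k • X = b_k (k=1,…,m), X ∈ S^n_+} is feasible. Then the set of optimal solutions of the dual SDP is a nonempty compact set and the optimal values of the primal and dual coincide. -/

import Mathlib

open Matrix Set

noncomputable section

abbrev Mat (n : ℕ) := Matrix (Fin n) (Fin n) ℝ

def ip {n : ℕ} (A B : Mat n) : ℝ := ∑ i, ∑ j, A i j * B i j

/-- Feasible set of the dual SDP `inf{A₀ • X : A_k • X = b_k, X ∈ S^n_+}`. -/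
def dualFeas {n m : ℕ} (A : Fin m → Mat n) (b : Fin m → ℝ) : Set (Mat n) :=
  {X | X.PosSemidef ∧ ∀ k, ip (A k) X = b k}

/-- Objective values of the dual SDP. -/
def dualVals {n m : ℕ} (A₀ : Mat n) (A : Fin m → Mat n) (b : Fin m → ℝ) : Set ℝ :=
  {v | ∃ X ∈ dualFeas A b, v = ip A₀ X}

/-- Set of optimal solutions of the dual SDP. -/
def dualOpt {n m : ℕ} (A₀ : Mat n) (A : Fin m → Mat n) (b : Fin m → ℝ) : Set (Mat n) :=
  {X ∈ dualFeas A b | ip A₀ X = sInf (dualVals A₀ A b)}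

/-- Objective values of the primal SDP `sup{bᵀy : A₀ - ∑ y_k A_k ∈ S^n_+}`. -/
def primalVals {n m : ℕ} (A₀ : Mat n) (A : Fin m → Mat n) (b : Fin m → ℝ) : Set ℝ :=
  {v | ∃ y : Fin m → ℝ, (A₀ - ∑ k, y k • A k).PosSemidef ∧ v = ∑ k, b k * y k}

/-!
Let `p` be the primal value. The open convex set `(p, ∞) × {M | vᵀMv > 0 for v ≠ 0}` misses the
affine set `{(bᵀy, A₀ - ∑ y_k A_k)}`, so Hahn–Banach gives a functional `(r, M) ↦ α r + g M`
separating them. Unboundedness along the cone and along the affine set forces `g ≤ 0` on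
`S^n_+`, `g A_k = α b_k` and `α p ≤ g A₀`, and strict feasibility excludes `α = 0`. Writing
`g = ip C` on symmetric matrices, `X = α⁻¹ C` is dual feasible with value at most `p`, which
with weak duality gives both attainment and strong duality. For compactness, a positive definite
slack `S = A₀ - ∑ y_k A_k` satisfies `S • X ≥ ε tr X` on `S^n_+`, while `S • X = A₀ • X - bᵀy` on
the dual feasible set, so dual sublevel sets have bounded trace, hence bounded entries.
-/

section RealLemmas

variable {a c u : ℝ}

theorem nonpos_of_forall_pos_add_mul_lt (h : ∀ t > 0, a + t * c < u) : c ≤ 0 := by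
  by_contra! hc
  have := h ((|u - a| + 1) / c) (by positivity)
  rw [div_mul_cancel₀ _ hc.ne'] at this
  linarith [le_abs_self (u - a)]

theorem le_of_forall_pos_add_mul_lt (h : ∀ t > 0, a + t * c < u) : a ≤ u := by
  have hlim : Filter.Tendsto (fun t => a + t * c) (nhdsWithin 0 (Ioi 0)) (nhds a) :=
    ((continuous_const.add (continuous_id.mul continuous_const)).tendsto' 0 a (by simp)).mono_left
      nhdsWithin_le_nhds
  exact le_of_tendsto hlim (eventually_nhdsWithin_of_forall fun t ht => (h t ht).le)

theorem eq_zero_of_forall_le_add_mul (h : ∀ t, u ≤ a + t * c) : c = 0 := by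
  by_contra hc
  have := h ((u - a - 1) / c)
  rw [div_mul_cancel₀ _ hc] at this
  linarith

end RealLemmas

section PosSemidef

variable {ι : Type*} [Fintype ι]

theorem Matrix.isClosed_setOf_posSemidef : IsClosed {X : Matrix ι ι ℝ | X.PosSemidef} := by
  simp only [posSemidef_iff_dotProduct_mulVec, IsHermitian, ofPred_and, ofPred_forall]
  exact (isClosed_eq (by fun_prop) continuous_id).inter
    (isClosed_iInter fun v => isClosed_le continuous_const (by fun_prop))

theorem Matrix.PosSemidef.abs_apply_le_trace {X : Matrix ι ι ℝ} (hX : X.PosSemidef) (i j : ι) :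
    |X i j| ≤ X.trace := by
  classical
  have hdiag (k : ι) : X k k ≤ X.trace :=
    Finset.single_le_sum (f := fun l => X l l) (fun _ _ => hX.diag_nonneg) (Finset.mem_univ k)
  have hsymm : X j i = X i j := by simpa using hX.isHermitian.apply i j
  have hplus := hX.dotProduct_mulVec_nonneg (Pi.single i 1 + Pi.single j 1)
  have hminus := hX.dotProduct_mulVec_nonneg (Pi.single i 1 - Pi.single j 1)
  simp only [star_trivial, dotProduct_add, add_dotProduct, dotProduct_sub, sub_dotProduct,
    mulVec_add, mulVec_sub, mulVec_single_one, single_one_dotProduct, col_apply] at hplus hminus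
  rw [abs_le]
  constructor <;> linarith [hdiag i, hdiag j]

theorem Matrix.isCompact_of_forall_posSemidef_trace_le {s : Set (Matrix ι ι ℝ)} (hs : IsClosed s)
    {R : ℝ} (h : ∀ X ∈ s, X.PosSemidef ∧ X.trace ≤ R) : IsCompact s := by
  refine (isCompact_univ_pi fun _ => isCompact_univ_pi fun _ => isCompact_Icc (a := -R) (b := R))
    |>.of_isClosed_subset hs fun X hX => ?_
  simp only [Set.mem_univ_pi, Set.mem_Icc]
  exact fun i j => abs_le.1 (((h X hX).1.abs_apply_le_trace i j).trans (h X hX).2)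

open scoped MatrixOrder in
theorem Matrix.PosDef.exists_pos_posSemidef_sub_smul_one [DecidableEq ι] {M : Matrix ι ι ℝ}
    (hM : M.PosDef) : ∃ ε : ℝ, 0 < ε ∧ (M - ε • 1).PosSemidef := by
  cases subsingleton_or_nontrivial (Matrix ι ι ℝ)
  · exact ⟨1, one_pos, by rw [Subsingleton.elim (M - _) 0]; exact .zero⟩
  obtain ⟨ε, hε, h⟩ := (CFC.exists_pos_algebraMap_le_iff hM.isHermitian.isSelfAdjoint).2
    fun x hx => hM.isStrictlyPositive.spectrum_pos hx
  exact ⟨ε, hε, by simpa [Matrix.le_iff, Algebra.algebraMap_eq_smul_one] using h⟩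

/-- Unlike `{M | M.PosDef}`, this set of not necessarily symmetric matrices is open in the whole
matrix space, as Hahn–Banach requires. -/
def posDefForms (ι : Type*) [Fintype ι] : Set (Matrix ι ι ℝ) :=
  {M | ∀ v ∈ Metric.sphere (0 : ι → ℝ) 1, 0 < v ⬝ᵥ M *ᵥ v}

theorem isOpen_posDefForms : IsOpen (posDefForms ι) := by
  refine isOpen_iff_mem_nhds.2 fun M hM =>
    (isCompact_sphere 0 1).eventually_forall_of_forall_eventually fun v hv => ?_
  have hquad : Continuous fun p : Matrix ι ι ℝ × (ι → ℝ) => p.2 ⬝ᵥ p.1 *ᵥ p.2 := by fun_prop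
  exact hquad.continuousAt.eventually (lt_mem_nhds (hM v hv))

theorem convex_posDefForms : Convex ℝ (posDefForms ι) := by
  intro M hM N hN s t hs ht hst v hv
  have := hM v hv
  have := hN v hv
  simp only [add_mulVec, smul_mulVec, dotProduct_add, dotProduct_smul, smul_eq_mul]
  rcases hs.eq_or_lt with rfl | hs
  · simp_all
  · positivity

theorem Matrix.PosDef.mem_posDefForms {M : Matrix ι ι ℝ} (hM : M.PosDef) : M ∈ posDefForms ι :=
  fun v hv => by simpa using hM.dotProduct_mulVec_pos (ne_zero_of_mem_unit_sphere ⟨v, hv⟩)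

theorem Matrix.IsHermitian.posDef_of_mem_posDefForms {M : Matrix ι ι ℝ} (hM : M.IsHermitian)
    (h : M ∈ posDefForms ι) : M.PosDef := by
  refine .of_dotProduct_mulVec_pos hM fun v hv => ?_
  have hn : ‖v‖ ≠ 0 := norm_ne_zero_iff.2 hv
  have := h (‖v‖⁻¹ • v) (by simp [norm_smul, hn])
  rw [mulVec_smul, dotProduct_smul, smul_dotProduct, smul_eq_mul, smul_eq_mul, ← mul_assoc] at this
  simpa using pos_of_mul_pos_right this (by positivity)

end PosSemidef

section InnerProduct

variable {n : ℕ}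

theorem ip_comm (A B : Mat n) : ip A B = ip B A := by
  simp only [ip, mul_comm]

theorem ip_smul_left (c : ℝ) (A B : Mat n) : ip (c • A) B = c * ip A B := by
  simp only [ip, Matrix.smul_apply, smul_eq_mul, Finset.mul_sum, mul_assoc]

theorem ip_smul_right (c : ℝ) (A B : Mat n) : ip A (c • B) = c * ip A B := by
  rw [ip_comm, ip_smul_left, ip_comm]

theorem ip_add_left (A B X : Mat n) : ip (A + B) X = ip A X + ip B X := by
  simp only [ip, Matrix.add_apply, add_mul, Finset.sum_add_distrib]

theorem ip_sub_left (A B X : Mat n) : ip (A - B) X = ip A X - ip B X := by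
  simp only [ip, Matrix.sub_apply, sub_mul, Finset.sum_sub_distrib]

theorem ip_sum_left {m : ℕ} (A : Fin m → Mat n) (X : Mat n) :
    ip (∑ k, A k) X = ∑ k, ip (A k) X := by
  simp only [ip, Matrix.sum_apply (s := Finset.univ), Finset.sum_mul]
  conv_rhs => rw [Finset.sum_comm]
  exact Finset.sum_congr rfl fun i _ => by rw [Finset.sum_comm]

theorem ip_one_left (X : Mat n) : ip 1 X = X.trace := by
  simp [ip, one_apply, trace]

theorem ip_vecMulVec_self (C : Mat n) (v : Fin n → ℝ) : ip C (vecMulVec v v) = v ⬝ᵥ C *ᵥ v := by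
  simp only [ip, vecMulVec_apply, dotProduct, mulVec, Finset.mul_sum]
  exact Finset.sum_congr rfl fun i _ => Finset.sum_congr rfl fun j _ => by ring

theorem ip_transpose_left_of_isSymm (C : Mat n) {M : Mat n} (hM : M.IsSymm) :
    ip Cᵀ M = ip C M := by
  simp only [ip, transpose_apply]
  rw [Finset.sum_comm]
  simp only [hM.apply]

theorem continuous_ip (A : Mat n) : Continuous (ip A) := by
  unfold ip
  fun_prop

/-- Schur's product theorem: `P ⊙ X` is positive semidefinite and `ip P X = 𝟙ᵀ (P ⊙ X) 𝟙`. -/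
theorem ip_nonneg_of_posSemidef {P X : Mat n} (hP : P.PosSemidef) (hX : X.PosSemidef) :
    0 ≤ ip P X := by
  have := (hP.hadamard hX).dotProduct_mulVec_nonneg fun _ => 1
  simp only [star_trivial, dotProduct, mulVec, hadamard_apply, one_mul, mul_one] at this
  exact this

theorem exists_isSymm_ip_eq (g : Mat n →ₗ[ℝ] ℝ) :
    ∃ C : Mat n, C.IsSymm ∧ ∀ M : Mat n, M.IsSymm → g M = ip C M := by
  set D : Mat n := of fun i j => g (single i j 1)
  have hD (M : Mat n) : g M = ip D M := by
    conv_lhs => rw [matrix_eq_sum_single M]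
    simp only [map_sum, ip, D, of_apply]
    refine Finset.sum_congr rfl fun i _ => Finset.sum_congr rfl fun j _ => ?_
    have h : single i j (M i j) = M i j • single i j (1 : ℝ) := by
      rw [smul_single, smul_eq_mul, mul_one]
    rw [h, map_smul, smul_eq_mul, mul_comm]
  refine ⟨(2 : ℝ)⁻¹ • (D + Dᵀ), (isSymm_add_transpose_self D).smul _, fun M hM => ?_⟩
  rw [ip_smul_left, ip_add_left, ip_transpose_left_of_isSymm D hM, hD]
  ring

theorem exists_pos_mul_trace_le_ip {M : Mat n} (hM : M.PosDef) :
    ∃ ε : ℝ, 0 < ε ∧ ∀ X : Mat n, X.PosSemidef → ε * X.trace ≤ ip M X := by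
  obtain ⟨ε, hε, hMε⟩ := hM.exists_pos_posSemidef_sub_smul_one
  refine ⟨ε, hε, fun X hX => ?_⟩
  have := ip_nonneg_of_posSemidef hMε hX
  rwa [ip_sub_left, ip_smul_left, ip_one_left, sub_nonneg] at this

end InnerProduct

section Duality

variable {n m : ℕ} {A₀ : Mat n} {A : Fin m → Mat n} {b : Fin m → ℝ}

def slack (A₀ : Mat n) (A : Fin m → Mat n) (y : Fin m → ℝ) : Mat n := A₀ - ∑ k, y k • A k

theorem slack_isSymm (hA₀ : A₀.IsSymm) (hA : ∀ k, (A k).IsSymm) (y : Fin m → ℝ) :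
    (slack A₀ A y).IsSymm := by
  simp only [slack, IsSymm, transpose_sub, transpose_sum, transpose_smul, hA₀.eq,
    fun k => (hA k).eq]

theorem ip_slack {X : Mat n} (hX : ∀ k, ip (A k) X = b k) (y : Fin m → ℝ) :
    ip (slack A₀ A y) X = ip A₀ X - ∑ k, b k * y k := by
  simp only [slack, ip_sub_left, ip_sum_left, ip_smul_left, hX, mul_comm]

theorem primal_le_dual {w v : ℝ} (hw : w ∈ primalVals A₀ A b) (hv : v ∈ dualVals A₀ A b) :
    w ≤ v := by
  obtain ⟨y, hy, rfl⟩ := hw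
  obtain ⟨X, ⟨hX, hXA⟩, rfl⟩ := hv
  have := ip_nonneg_of_posSemidef (show (slack A₀ A y).PosSemidef from hy) hX
  rw [ip_slack hXA] at this
  linarith

theorem isClosed_dualFeas (A : Fin m → Mat n) (b : Fin m → ℝ) : IsClosed (dualFeas A b) := by
  simp only [dualFeas, ofPred_and, ofPred_forall]
  exact isClosed_setOf_posSemidef.inter
    (isClosed_iInter fun k => isClosed_eq (continuous_ip _) continuous_const)

theorem isCompact_dualFeas_sublevel (hstrict : ∃ y, (slack A₀ A y).PosDef) (c : ℝ) :
    IsCompact {X ∈ dualFeas A b | ip A₀ X ≤ c} := by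
  obtain ⟨y, hy⟩ := hstrict
  obtain ⟨ε, hε, hεtr⟩ := exists_pos_mul_trace_le_ip hy
  refine isCompact_of_forall_posSemidef_trace_le
    ((isClosed_dualFeas A b).inter (isClosed_le (continuous_ip A₀) continuous_const))
    (R := (c - ∑ k, b k * y k) / ε) fun X ⟨⟨hX, hXA⟩, hXc⟩ => ⟨hX, ?_⟩
  have := hεtr X hX
  rw [ip_slack hXA] at this
  rw [le_div_iff₀' hε]
  linarith

theorem convex_range_value_slack (A₀ : Mat n) (A : Fin m → Mat n) (b : Fin m → ℝ) :
    Convex ℝ (range fun y : Fin m → ℝ => ((∑ k, b k * y k : ℝ), slack A₀ A y)) := by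
  rintro _ ⟨y, rfl⟩ _ ⟨z, rfl⟩ s t - - hst
  obtain rfl : t = 1 - s := by linarith
  refine ⟨s • y + (1 - s) • z, Prod.ext ?_ ?_⟩
  · simp only [Pi.add_apply, Pi.smul_apply, smul_eq_mul, Prod.fst_add, Prod.smul_fst,
      Finset.mul_sum, ← Finset.sum_add_distrib]
    exact Finset.sum_congr rfl fun k _ => by ring
  · simp only [slack, Pi.add_apply, Pi.smul_apply, Prod.snd_add, Prod.smul_snd, add_smul,
      smul_assoc, Finset.sum_add_distrib, ← Finset.smul_sum]
    module

theorem exists_separating_functional (hA₀ : A₀.IsSymm) (hA : ∀ k, (A k).IsSymm) {p : ℝ}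
    (hp : ∀ y, (slack A₀ A y).PosDef → ∑ k, b k * y k ≤ p) :
    ∃ (α u : ℝ) (g : Mat n →ₗ[ℝ] ℝ), (∀ r > p, ∀ M ∈ posDefForms (Fin n), r * α + g M < u) ∧
      ∀ y, u ≤ (∑ k, b k * y k) * α + g (slack A₀ A y) := by
  have hdisj : Disjoint (Ioi p ×ˢ posDefForms (Fin n))
      (range fun y : Fin m → ℝ => ((∑ k, b k * y k : ℝ), slack A₀ A y)) := by
    rw [Set.disjoint_left]
    rintro _ ⟨hr, hM⟩ ⟨y, rfl⟩
    have hy := (isHermitian_iff_isSymm.2 (slack_isSymm hA₀ hA y)).posDef_of_mem_posDefForms hM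
    exact (hp y hy).not_gt hr
  obtain ⟨f, u, hO, hL⟩ := geometric_hahn_banach_open ((convex_Ioi p).prod convex_posDefForms)
    (isOpen_Ioi.prod isOpen_posDefForms) (convex_range_value_slack A₀ A b) hdisj
  have hf (r : ℝ) (M : Mat n) : f (r, M) = r * f (1, 0) + f (0, M) := by
    rw [← smul_eq_mul, ← map_smul, ← map_add]
    simp
  refine ⟨f (1, 0), u, f.toLinearMap.comp (LinearMap.inr ℝ ℝ (Mat n)), fun r hr M hM => ?_,
    fun y => ?_⟩
  · have h := hO (r, M) ⟨hr, hM⟩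
    rwa [hf] at h
  · have h := hL _ ⟨y, rfl⟩
    rwa [hf] at h

theorem dual_certificate_of_separation (hstrict : ∃ y, (slack A₀ A y).PosDef) {p α u : ℝ}
    {g : Mat n →ₗ[ℝ] ℝ} (hO : ∀ r > p, ∀ M ∈ posDefForms (Fin n), r * α + g M < u)
    (hL : ∀ y, u ≤ (∑ k, b k * y k) * α + g (slack A₀ A y)) :
    α < 0 ∧ (∀ N : Mat n, N.PosSemidef → g N ≤ 0) ∧ (∀ k, g (A k) = α * b k) ∧ α * p ≤ g A₀ := by
  have hO₁ (r : ℝ) (hr : p < r) : r * α + g 1 < u := hO r hr 1 PosDef.one.mem_posDefForms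
  refine ⟨?_, fun N hN => ?_, fun k => ?_, ?_⟩
  · have hα : α ≤ 0 := nonpos_of_forall_pos_add_mul_lt (a := p * α + g 1) (u := u) fun t ht => by
      linarith [hO₁ (p + t) (by linarith)]
    refine hα.lt_of_ne fun hα₀ => ?_
    obtain ⟨y, hy⟩ := hstrict
    have h₁ := hO (p + 1) (by linarith) _ hy.mem_posDefForms
    have h₂ := hL y
    simp only [hα₀, mul_zero, zero_add] at h₁ h₂
    linarith
  · refine nonpos_of_forall_pos_add_mul_lt (a := (p + 1) * α + g 1) (u := u) fun t ht => ?_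
    have h := hO (p + 1) (by linarith) (1 + t • N)
      (PosDef.one.add_posSemidef (hN.smul ht.le)).mem_posDefForms
    rw [map_add, map_smul, smul_eq_mul] at h
    linarith
  · have h := eq_zero_of_forall_le_add_mul (a := g A₀) (c := α * b k - g (A k)) (u := u)
      fun t => by
        have := hL (Pi.single k t)
        simp only [Pi.single_apply, mul_ite, mul_zero, Finset.sum_ite_eq', Finset.mem_univ,
          ↓reduceIte, slack, ite_smul, zero_smul, map_sub, map_smul, smul_eq_mul] at this
        linarith
    linarith
  · have h := le_of_forall_pos_add_mul_lt (a := p * α) (c := α + g 1) (u := u) fun t ht => by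
      have := hO (p + t) (by linarith) (t • 1) (PosDef.one.smul ht).mem_posDefForms
      rw [map_smul, smul_eq_mul] at this
      linarith
    have := hL 0
    simp only [slack, Pi.zero_apply, mul_zero, Finset.sum_const_zero, zero_mul, zero_smul, sub_zero,
      zero_add] at this
    linarith

theorem exists_dualFeas_of_certificate (hA₀ : A₀.IsSymm) (hA : ∀ k, (A k).IsSymm)
    {g : Mat n →ₗ[ℝ] ℝ} {α p : ℝ} (hα : α < 0) (hg : ∀ N : Mat n, N.PosSemidef → g N ≤ 0)
    (hgA : ∀ k, g (A k) = α * b k) (hgA₀ : α * p ≤ g A₀) :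
    ∃ X ∈ dualFeas A b, ip A₀ X ≤ p := by
  obtain ⟨C, hC, hgC⟩ := exists_isSymm_ip_eq g
  refine ⟨α⁻¹ • C, ⟨?_, fun k => ?_⟩, ?_⟩
  · refine .of_dotProduct_mulVec_nonneg (isHermitian_iff_isSymm.2 (hC.smul _)) fun v => ?_
    have hv := posSemidef_vecMulVec_self_star v
    simp only [star_trivial] at hv ⊢
    rw [smul_mulVec, dotProduct_smul, smul_eq_mul, ← ip_vecMulVec_self,
      ← hgC _ (isHermitian_iff_isSymm.1 hv.isHermitian)]
    exact mul_nonneg_of_nonpos_of_nonpos (inv_nonpos.2 hα.le) (hg _ hv)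
  · rw [ip_smul_right, ip_comm, ← hgC _ (hA k), hgA, inv_mul_cancel_left₀ hα.ne]
  · rw [ip_smul_right, ip_comm, ← hgC _ hA₀]
    calc α⁻¹ * g A₀ ≤ α⁻¹ * (α * p) := mul_le_mul_of_nonpos_left hgA₀ (inv_nonpos.2 hα.le)
      _ = p := inv_mul_cancel_left₀ hα.ne p

theorem exists_dualFeas_ip_le (hA₀ : A₀.IsSymm) (hA : ∀ k, (A k).IsSymm)
    (hstrict : ∃ y, (slack A₀ A y).PosDef) {p : ℝ}
    (hp : ∀ y, (slack A₀ A y).PosDef → ∑ k, b k * y k ≤ p) :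
    ∃ X ∈ dualFeas A b, ip A₀ X ≤ p := by
  obtain ⟨α, u, g, hO, hL⟩ := exists_separating_functional hA₀ hA hp
  obtain ⟨hα, hg, hgA, hgA₀⟩ := dual_certificate_of_separation hstrict hO hL
  exact exists_dualFeas_of_certificate hA₀ hA hα hg hgA hgA₀

end Duality

/-- If the primal SDP is strictly feasible and the dual SDP is feasible, then
the set of dual optimal solutions is nonempty and compact, and the primal and
dual optimal values coincide. No linear independence of the `A_k` is assumed. -/
theorem dual_opt_nonempty_compact_and_strong_duality (n m : ℕ)
    (A₀ : Mat n) (A : Fin m → Mat n) (b : Fin m → ℝ)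
    (hA₀ : A₀.IsSymm) (hA : ∀ k, (A k).IsSymm)
    (hPstrict : ∃ y : Fin m → ℝ, (A₀ - ∑ k, y k • A k).PosDef)
    (hDfeas : (dualFeas A b).Nonempty) :
    (dualOpt A₀ A b).Nonempty ∧ IsCompact (dualOpt A₀ A b) ∧
      sSup (primalVals A₀ A b) = sInf (dualVals A₀ A b) := by
  obtain ⟨y₀, hy₀⟩ := hPstrict
  obtain ⟨X₀, hX₀⟩ := hDfeas
  have hy₀mem : ∑ k, b k * y₀ k ∈ primalVals A₀ A b := ⟨y₀, hy₀.posSemidef, rfl⟩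
  have hX₀mem : ip A₀ X₀ ∈ dualVals A₀ A b := ⟨X₀, hX₀, rfl⟩
  have hweak : sSup (primalVals A₀ A b) ≤ sInf (dualVals A₀ A b) :=
    csSup_le ⟨_, hy₀mem⟩ fun w hw => le_csInf ⟨_, hX₀mem⟩ fun v hv => primal_le_dual hw hv
  obtain ⟨X, hX, hXval⟩ := exists_dualFeas_ip_le (p := sSup (primalVals A₀ A b)) hA₀ hA ⟨y₀, hy₀⟩
    fun y hy => le_csSup ⟨_, fun w hw => primal_le_dual hw hX₀mem⟩ ⟨y, hy.posSemidef, rfl⟩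
  have hopt : ip A₀ X = sInf (dualVals A₀ A b) :=
    le_antisymm (hXval.trans hweak)
      (csInf_le ⟨_, fun v hv => primal_le_dual hy₀mem hv⟩ ⟨X, hX, rfl⟩)
  have hclosed : IsClosed (dualOpt A₀ A b) :=
    (isClosed_dualFeas A b).inter (isClosed_eq (continuous_ip A₀) continuous_const)
  refine ⟨⟨X, hX, hopt⟩, ?_, le_antisymm hweak (hopt ▸ hXval)⟩
  exact (isCompact_dualFeas_sublevel ⟨y₀, hy₀⟩ _).of_isClosed_subset hclosed
    fun Y hY => ⟨hY.1, hY.2.le⟩
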